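/- Liouville theorem for the flat-target Dirac-harmonic map system on Euclidean space: let n ≥ 3, let φ : ℝⁿ → ℝᵐ be smooth with Δφ = 0 and ψ : ℝⁿ → (ℂᴺ)ᵐ smooth with Dψ = 0. If ∫_{ℝⁿ} ( |dφ|² + |∇ψ|^{4/3} + |ψ|⁴ ) dx < ∞, where |dφ|² := ∑ᵢ|∂ᵢφ|² and |∇ψ|² := ∑ᵢ|∂ᵢψ|², then φ is constant. -/

import Mathlib

/-!
Every component derivative `u = ∂ᵢφᵃ` is again harmonic, and `u ∈ L²(ℝⁿ)` by the energy bound.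
Testing `Δu = 0` against `η²u`, for a cutoff `η` equal to `1` on `B_R` with `|∇η| ≲ 1/R`, gives
the Caccioppoli inequality `∫_{B_R} |∇u|² ≤ C R⁻² ∫ u²`; letting `R → ∞` shows `∇u = 0`. So `u`
is constant, and a square integrable constant on `ℝⁿ` vanishes. Hence `dφ = 0`.
-/

open Matrix MeasureTheory

noncomputable section

/-- Partial derivative of `f` in the `i`-th coordinate direction at `x`. -/
def epd {n : ℕ} {E : Type*} [NormedAddCommGroup E] [NormedSpace ℝ E]
    (f : EuclideanSpace ℝ (Fin n) → E) (i : Fin n) (x : EuclideanSpace ℝ (Fin n)) : E :=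
  fderiv ℝ f x (EuclideanSpace.single i 1)

/-- Real part of the standard Hermitian inner product on `ℂᴺ`. -/
def rinner {N : ℕ} (a b : Fin N → ℂ) : ℝ := (∑ k, star (a k) * b k).re

/-- Real part of the Hermitian inner product on `(ℂᴺ)ᵐ`, summed over the `m` components. -/
def rinnerV {m N : ℕ} (a b : Fin m → Fin N → ℂ) : ℝ := ∑ α, rinner (a α) (b α)

/-- Squared Hermitian norm on `(ℂᴺ)ᵐ`. -/
def nsqV {m N : ℕ} (a : Fin m → Fin N → ℂ) : ℝ := rinnerV a a

/-- The matrices `γᵢ` are skew-Hermitian and satisfy the Clifford relations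
`γᵢγⱼ + γⱼγᵢ = -2 δᵢⱼ Id`. -/
def IsCliffordFamily {n N : ℕ} (γ : Fin n → Matrix (Fin N) (Fin N) ℂ) : Prop :=
  (∀ i, (γ i)ᴴ = -(γ i)) ∧
  (∀ i j, γ i * γ j + γ j * γ i =
    if i = j then -(2 : ℂ) • (1 : Matrix (Fin N) (Fin N) ℂ) else 0)

/-- The Euclidean Dirac operator acting diagonally on vector spinors `ψ : ℝⁿ → (ℂᴺ)ᵐ`. -/
def DiracV {n N m : ℕ} (γ : Fin n → Matrix (Fin N) (Fin N) ℂ)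
    (ψ : EuclideanSpace ℝ (Fin n) → (Fin m → Fin N → ℂ))
    (x : EuclideanSpace ℝ (Fin n)) : Fin m → Fin N → ℂ :=
  fun α => ∑ i, (γ i).mulVec (epd ψ i x α)

/-- The Euclidean inner product `⟨∂ᵢφ, ∂ⱼφ⟩` of partial derivatives of a map
`φ : ℝⁿ → ℝᵐ`. -/
def dphiInner {n m : ℕ} (φ : EuclideanSpace ℝ (Fin n) → (Fin m → ℝ)) (i j : Fin n)
    (x : EuclideanSpace ℝ (Fin n)) : ℝ :=
  ∑ a, epd φ i x a * epd φ j x a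

/-- `φ` is harmonic: `Δφ = 0` componentwise. -/
def IsHarmonic {n m : ℕ} (φ : EuclideanSpace ℝ (Fin n) → (Fin m → ℝ)) : Prop :=
  ∀ x, ∑ i, epd (epd φ i) i x = 0

open Metric Filter

section PartialDerivative

variable {n : ℕ} {F G : Type*} [NormedAddCommGroup F] [NormedSpace ℝ F]
  [NormedAddCommGroup G] [NormedSpace ℝ G] {f : EuclideanSpace ℝ (Fin n) → F}

theorem epd_clm_comp (L : F →L[ℝ] G) {x : EuclideanSpace ℝ (Fin n)}
    (hf : DifferentiableAt ℝ f x) (i : Fin n) :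
    epd (fun y => L (f y)) i x = L (epd f i x) := by
  simp [epd, fderiv_fun_comp x L.differentiableAt hf]

theorem epd_pi_apply {m : ℕ} {f : EuclideanSpace ℝ (Fin n) → Fin m → ℝ}
    (hf : Differentiable ℝ f) (a : Fin m) (i : Fin n) :
    epd (fun y => f y a) i = fun x => epd f i x a :=
  funext fun x => epd_clm_comp (ContinuousLinearMap.proj a) (hf x) i

theorem epd_fun_mul {u v : EuclideanSpace ℝ (Fin n) → ℝ} {x : EuclideanSpace ℝ (Fin n)}
    (hu : DifferentiableAt ℝ u x) (hv : DifferentiableAt ℝ v x) (i : Fin n) :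
    epd (fun y => u y * v y) i x = epd u i x * v x + u x * epd v i x := by
  simp only [epd, fderiv_fun_mul hu hv, _root_.add_apply, _root_.smul_apply, smul_eq_mul]
  ring

theorem epd_fun_sum {ι : Type*} (s : Finset ι) {f : ι → EuclideanSpace ℝ (Fin n) → F}
    {x : EuclideanSpace ℝ (Fin n)} (hf : ∀ k ∈ s, DifferentiableAt ℝ (f k) x) (i : Fin n) :
    epd (fun y => ∑ k ∈ s, f k y) i x = ∑ k ∈ s, epd (f k) i x := by
  simp [epd, fderiv_fun_sum hf]

theorem ContDiff.contDiff_epd {k l : WithTop ℕ∞} (hf : ContDiff ℝ k f) (hlk : l + 1 ≤ k)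
    (i : Fin n) : ContDiff ℝ l (epd f i) :=
  (hf.fderiv_right hlk).clm_apply contDiff_const

theorem ContDiff.continuous_epd (hf : ContDiff ℝ 1 f) (i : Fin n) : Continuous (epd f i) :=
  (hf.continuous_fderiv one_ne_zero).clm_apply continuous_const

theorem epd_of_notMem_tsupport {x : EuclideanSpace ℝ (Fin n)} (hx : x ∉ tsupport f)
    (i : Fin n) : epd f i x = 0 := by
  simp [epd, fderiv_of_notMem_tsupport ℝ hx]

theorem HasCompactSupport.epd (hf : HasCompactSupport f) (i : Fin n) :
    HasCompactSupport (epd f i) :=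
  (hf.fderiv ℝ).comp_left (g := fun L : EuclideanSpace ℝ (Fin n) →L[ℝ] F =>
    L (EuclideanSpace.single i 1)) rfl

theorem epd_epd_comm (hf : ContDiff ℝ 2 f) (i j : Fin n) (x : EuclideanSpace ℝ (Fin n)) :
    epd (epd f i) j x = epd (epd f j) i x := by
  have hf' : DifferentiableAt ℝ (fderiv ℝ f) x :=
    (hf.fderiv_right (m := 1) le_rfl).differentiable one_ne_zero x
  have h (k l : Fin n) : epd (epd f k) l x
      = fderiv ℝ (fderiv ℝ f) x (EuclideanSpace.single l 1) (EuclideanSpace.single k 1) :=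
    epd_clm_comp (ContinuousLinearMap.apply ℝ F (EuclideanSpace.single k 1)) hf' l
  rw [h, h, hf.contDiffAt.isSymmSndFDerivAt (by simp)]

theorem eq_of_epd_eq_zero (hf : Differentiable ℝ f) (h : ∀ i x, epd f i x = 0)
    (x y : EuclideanSpace ℝ (Fin n)) : f x = f y := by
  refine is_const_of_fderiv_eq_zero hf (fun z => ?_) x y
  refine ContinuousLinearMap.coe_injective <|
    (EuclideanSpace.basisFun (Fin n) ℝ).toBasis.ext fun i => ?_
  simpa [epd] using h i z

end PartialDerivative

section Harmonic

variable {n : ℕ} {u : EuclideanSpace ℝ (Fin n) → ℝ}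

theorem IsHarmonic.component {m : ℕ} {φ : EuclideanSpace ℝ (Fin n) → Fin m → ℝ}
    (h : IsHarmonic φ) (hφ : ContDiff ℝ 2 φ) (a : Fin m) (x : EuclideanSpace ℝ (Fin n)) :
    ∑ j, epd (epd (fun y => φ y a) j) j x = 0 := by
  have hdφ (j : Fin n) : Differentiable ℝ (epd φ j) :=
    (hφ.contDiff_epd (l := 1) le_rfl j).differentiable one_ne_zero
  simp only [epd_pi_apply (hφ.differentiable two_ne_zero), epd_pi_apply (hdφ _)]
  simpa using congrFun (h x) a

theorem epd_harmonic (hu : ContDiff ℝ 3 u) (hΔ : ∀ x, ∑ j, epd (epd u j) j x = 0) (i : Fin n)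
    (x : EuclideanSpace ℝ (Fin n)) : ∑ j, epd (epd (epd u i) j) j x = 0 := by
  have hu2 : ContDiff ℝ 2 u := hu.of_le (by norm_num)
  have hcomm (j : Fin n) : epd (epd (epd u i) j) j x = epd (epd (epd u j) j) i x := by
    rw [show epd (epd u i) j = epd (epd u j) i from funext (epd_epd_comm hu2 i j)]
    exact epd_epd_comm (hu.contDiff_epd (l := 2) le_rfl j) i j x
  have hdiff (j : Fin n) : DifferentiableAt ℝ (epd (epd u j) j) x :=
    ((hu.contDiff_epd (l := 2) le_rfl j).contDiff_epd (l := 1) le_rfl j).differentiable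
      one_ne_zero x
  simp only [hcomm, ← epd_fun_sum _ (fun j _ => hdiff j), hΔ]
  simp [epd]

end Harmonic

section Caccioppoli

variable {n : ℕ} {u η : EuclideanSpace ℝ (Fin n) → ℝ}

theorem ContDiff.continuous_sum_sq_epd (hu : ContDiff ℝ 1 u) :
    Continuous fun x => ∑ k, epd u k x ^ 2 :=
  continuous_finsetSum _ fun k _ => (hu.continuous_epd k).pow 2

theorem integral_mul_epd_eq_neg_epd_mul {f g : EuclideanSpace ℝ (Fin n) → ℝ}
    (hf : ContDiff ℝ 1 f) (hfc : HasCompactSupport f) (hg : ContDiff ℝ 1 g) (k : Fin n) :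
    ∫ x, f x * epd g k x = -∫ x, epd f k x * g x := by
  exact integral_mul_fderiv_eq_neg_fderiv_mul_of_integrable
    (((hf.continuous_epd k).mul hg.continuous).integrable_of_hasCompactSupport
      (hfc.epd k).mul_right)
    ((hf.continuous.mul (hg.continuous_epd k)).integrable_of_hasCompactSupport hfc.mul_right)
    ((hf.continuous.mul hg.continuous).integrable_of_hasCompactSupport hfc.mul_right)
    (fun x _ => hf.differentiable one_ne_zero x) (fun x _ => hg.differentiable one_ne_zero x)

theorem integral_sum_epd_mul_epd_eq_zero {f : EuclideanSpace ℝ (Fin n) → ℝ}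
    (hf : ContDiff ℝ 1 f) (hfc : HasCompactSupport f) (hu : ContDiff ℝ 2 u)
    (hΔ : ∀ x, ∑ j, epd (epd u j) j x = 0) :
    ∫ x, ∑ k, epd f k x * epd u k x = 0 := by
  have hint (k : Fin n) : Integrable fun x => epd f k x * epd u k x :=
    ((hf.continuous_epd k).mul (hu.contDiff_epd (l := 1) le_rfl k).continuous)
      |>.integrable_of_hasCompactSupport (hfc.epd k).mul_right
  have hint' (k : Fin n) : Integrable fun x => f x * epd (epd u k) k x :=
    (hf.continuous.mul ((hu.contDiff_epd (l := 1) le_rfl k).continuous_epd k))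
      |>.integrable_of_hasCompactSupport hfc.mul_right
  calc ∫ x, ∑ k, epd f k x * epd u k x
      = -∑ k, ∫ x, f x * epd (epd u k) k x := by
        simp only [integral_finsetSum _ (fun k _ => hint k),
          integral_mul_epd_eq_neg_epd_mul hf hfc (hu.contDiff_epd le_rfl _),
          Finset.sum_neg_distrib, neg_neg]
    _ = -∫ x, f x * ∑ k, epd (epd u k) k x := by
        simp only [← integral_finsetSum _ (fun k _ => hint' k), Finset.mul_sum]
    _ = 0 := by simp [hΔ]

theorem integral_sq_mul_sum_sq_epd_le (hη : ContDiff ℝ 1 η) (hηc : HasCompactSupport η)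
    (hu : ContDiff ℝ 2 u) (hΔ : ∀ x, ∑ j, epd (epd u j) j x = 0) :
    ∫ x, η x ^ 2 * ∑ k, epd u k x ^ 2 ≤ 4 * ∫ x, (∑ k, epd η k x ^ 2) * u x ^ 2 := by
  have hu1 : ContDiff ℝ 1 u := hu.of_le one_le_two
  have hdu (k : Fin n) : Continuous (epd u k) := hu1.continuous_epd k
  have hdη (k : Fin n) : Continuous (epd η k) := hη.continuous_epd k
  set f : EuclideanSpace ℝ (Fin n) → ℝ := fun x => η x * η x * u x
  have hf : ContDiff ℝ 1 f := (hη.mul hη).mul hu1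
  have hfc : HasCompactSupport f :=
    HasCompactSupport.intro hηc fun x hx => by simp [f, image_eq_zero_of_notMem_tsupport hx]
  have hepd_f (k : Fin n) (x : EuclideanSpace ℝ (Fin n)) :
      epd f k x = 2 * η x * epd η k x * u x + η x ^ 2 * epd u k x := by
    have hηx := hη.differentiable one_ne_zero x
    rw [epd_fun_mul (u := fun y => η y * η y) (hηx.mul hηx) (hu1.differentiable one_ne_zero x),
      epd_fun_mul hηx hηx]
    ring
  -- termwise, the difference of the two sides is `½ (η ∂ₖu + 2 u ∂ₖη)²`
  have hpointwise (x : EuclideanSpace ℝ (Fin n)) :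
      1 / 2 * (η x ^ 2 * ∑ k, epd u k x ^ 2) - 2 * ((∑ k, epd η k x ^ 2) * u x ^ 2)
        ≤ ∑ k, epd f k x * epd u k x := by
    simp only [Finset.mul_sum, Finset.sum_mul, ← Finset.sum_sub_distrib, hepd_f]
    refine Finset.sum_le_sum fun k _ => ?_
    nlinarith [sq_nonneg (η x * epd u k x + 2 * u x * epd η k x)]
  have hint {g : EuclideanSpace ℝ (Fin n) → ℝ} (hg : Continuous g)
      (hg0 : ∀ x ∉ tsupport η, g x = 0) : Integrable g :=
    hg.integrable_of_hasCompactSupport (HasCompactSupport.intro hηc hg0)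
  have hint_η : Integrable fun x => η x ^ 2 * ∑ k, epd u k x ^ 2 :=
    hint ((hη.continuous.pow 2).mul hu1.continuous_sum_sq_epd)
      fun x hx => by simp [image_eq_zero_of_notMem_tsupport hx]
  have hint_dη : Integrable fun x => (∑ k, epd η k x ^ 2) * u x ^ 2 :=
    hint ((continuous_finsetSum _ fun k _ => (hdη k).pow 2).mul (hu.continuous.pow 2))
      fun x hx => by simp [epd_of_notMem_tsupport hx]
  have hint_f : Integrable fun x => ∑ k, epd f k x * epd u k x :=
    hint (continuous_finsetSum _ fun k _ => (hf.continuous_epd k).mul (hdu k))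
      fun x hx => by simp [hepd_f, image_eq_zero_of_notMem_tsupport hx, epd_of_notMem_tsupport hx]
  have := integral_mono ((hint_η.const_mul _).sub (hint_dη.const_mul _)) hint_f hpointwise
  simp only [Pi.sub_apply] at this
  rw [integral_sub (hint_η.const_mul _) (hint_dη.const_mul _), integral_const_mul,
    integral_const_mul, integral_sum_epd_mul_epd_eq_zero hf hfc hu hΔ] at this
  linarith

end Caccioppoli

section Liouville

variable {n : ℕ} {u : EuclideanSpace ℝ (Fin n) → ℝ}

theorem exists_cutoff_sum_sq_epd_le (n : ℕ) : ∃ C : ℝ, ∀ R : ℝ, 0 < R →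
    ∃ η : EuclideanSpace ℝ (Fin n) → ℝ, ContDiff ℝ 1 η ∧ HasCompactSupport η ∧
      Set.EqOn η 1 (ball 0 R) ∧ ∀ x, ∑ k, epd η k x ^ 2 ≤ C / R ^ 2 := by
  let c : ContDiffBump (0 : EuclideanSpace ℝ (Fin n)) := ⟨1, 2, one_pos, one_lt_two⟩
  obtain ⟨C, hC⟩ := (c.hasCompactSupport.fderiv ℝ).exists_bound_of_continuous
    (c.contDiff.continuous_fderiv one_ne_zero)
  refine ⟨n * C ^ 2, fun R hR => ⟨fun x => c (R⁻¹ • x), c.contDiff.comp (contDiff_const_smul _),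
    c.hasCompactSupport.comp_smul (inv_ne_zero hR.ne'), fun x hx => ?_, fun x => ?_⟩⟩
  · refine c.one_of_mem_closedBall ?_
    rw [mem_ball_zero_iff] at hx
    rw [mem_closedBall_zero_iff, norm_smul, norm_inv, Real.norm_of_nonneg hR.le,
      inv_mul_le_iff₀ hR]
    change ‖x‖ ≤ R * 1
    linarith
  have hk (k : Fin n) : |epd (fun x => c (R⁻¹ • x)) k x| ≤ C / R := by
    rw [epd, fderiv_comp_smul, _root_.smul_apply, smul_eq_mul, abs_mul,
      abs_inv, abs_of_pos hR, inv_mul_le_iff₀ hR, mul_div_cancel₀ _ hR.ne']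
    calc |fderiv ℝ c (R⁻¹ • x) (EuclideanSpace.single k 1)|
        ≤ ‖fderiv ℝ c (R⁻¹ • x)‖ * ‖EuclideanSpace.single k (1 : ℝ)‖ :=
          (fderiv ℝ c (R⁻¹ • x)).le_opNorm _
      _ ≤ C := by simpa using hC (R⁻¹ • x)
  calc ∑ k, epd (fun x => c (R⁻¹ • x)) k x ^ 2 ≤ ∑ _k : Fin n, (C / R) ^ 2 :=
        Finset.sum_le_sum fun k _ => sq_le_sq' (abs_le.mp (hk k)).1 (abs_le.mp (hk k)).2
    _ = n * C ^ 2 / R ^ 2 := by simp [div_pow, mul_div_assoc]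

theorem setIntegral_ball_sum_sq_epd_le (hu : ContDiff ℝ 2 u)
    (hΔ : ∀ x, ∑ j, epd (epd u j) j x = 0) (hL2 : Integrable fun x => u x ^ 2) :
    ∃ C : ℝ, ∀ ρ R : ℝ, 0 < R → ρ ≤ R →
      ∫ x in ball 0 ρ, ∑ k, epd u k x ^ 2 ≤ C / R ^ 2 := by
  obtain ⟨C, hC⟩ := exists_cutoff_sum_sq_epd_le n
  refine ⟨4 * C * ∫ x, u x ^ 2, fun ρ R hR hρR => ?_⟩
  obtain ⟨η, hη, hηc, hη1, hdη⟩ := hC R hR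
  have hint : Integrable fun x => η x ^ 2 * ∑ k, epd u k x ^ 2 :=
    ((hη.continuous.pow 2).mul (hu.of_le one_le_two).continuous_sum_sq_epd)
      |>.integrable_of_hasCompactSupport <|
        HasCompactSupport.intro hηc fun x hx => by simp [image_eq_zero_of_notMem_tsupport hx]
  calc ∫ x in ball 0 ρ, ∑ k, epd u k x ^ 2
      = ∫ x in ball 0 ρ, η x ^ 2 * ∑ k, epd u k x ^ 2 :=
        setIntegral_congr_fun measurableSet_ball fun x hx => by
          simp [hη1 (ball_subset_ball hρR hx)]
    _ ≤ ∫ x, η x ^ 2 * ∑ k, epd u k x ^ 2 :=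
        setIntegral_le_integral hint (Eventually.of_forall fun x => by positivity)
    _ ≤ 4 * ∫ x, (∑ k, epd η k x ^ 2) * u x ^ 2 := integral_sq_mul_sum_sq_epd_le hη hηc hu hΔ
    _ ≤ 4 * ∫ x, C / R ^ 2 * u x ^ 2 := by
        refine mul_le_mul_of_nonneg_left (integral_mono_of_nonneg
          (Eventually.of_forall fun x => by positivity) (hL2.const_mul _)
          (Eventually.of_forall fun x => ?_)) zero_le_four
        exact mul_le_mul_of_nonneg_right (hdη x) (sq_nonneg _)
    _ = 4 * C * (∫ x, u x ^ 2) / R ^ 2 := by rw [integral_const_mul]; ring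

theorem epd_eq_zero_of_harmonic_of_integrable_sq (hu : ContDiff ℝ 2 u)
    (hΔ : ∀ x, ∑ j, epd (epd u j) j x = 0) (hL2 : Integrable fun x => u x ^ 2) (i : Fin n)
    (x : EuclideanSpace ℝ (Fin n)) : epd u i x = 0 := by
  obtain ⟨C, hC⟩ := setIntegral_ball_sum_sq_epd_le hu hΔ hL2
  set E : EuclideanSpace ℝ (Fin n) → ℝ := fun x => ∑ k, epd u k x ^ 2
  have hE : Continuous E := (hu.of_le one_le_two).continuous_sum_sq_epd
  set ρ := ‖x‖ + 1
  have hint_zero : ∫ y in ball 0 ρ, E y = 0 := by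
    refine le_antisymm (ge_of_tendsto ((tendsto_const_nhds (x := C)).div_atTop
      (tendsto_pow_atTop two_ne_zero)) ?_) (setIntegral_nonneg measurableSet_ball
        fun y _ => by positivity)
    filter_upwards [eventually_ge_atTop ρ] with R hR
    exact hC ρ R ((by positivity : (0 : ℝ) < ‖x‖ + 1).trans_le hR) hR
  have hE_ae : E =ᵐ[volume.restrict (ball 0 ρ)] 0 :=
    (setIntegral_eq_zero_iff_of_nonneg_ae (Eventually.of_forall fun y => by positivity)
      ((hE.continuousOn.integrableOn_compact (isCompact_closedBall 0 ρ)).mono_set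
        ball_subset_closedBall)).mp hint_zero
  have hEx : E x = 0 := Measure.eqOn_open_of_ae_eq hE_ae isOpen_ball hE.continuousOn
    continuousOn_const (by simp [ρ])
  have hi : epd u i x ^ 2 ≤ E x :=
    Finset.single_le_sum (f := fun k => epd u k x ^ 2) (fun k _ => sq_nonneg _)
      (Finset.mem_univ i)
  exact pow_eq_zero_iff two_ne_zero |>.mp (le_antisymm (hi.trans hEx.le) (sq_nonneg _))

theorem eq_zero_of_harmonic_of_integrable_sq (hn : 0 < n) (hu : ContDiff ℝ 2 u)
    (hΔ : ∀ x, ∑ j, epd (epd u j) j x = 0) (hL2 : Integrable fun x => u x ^ 2)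
    (x : EuclideanSpace ℝ (Fin n)) : u x = 0 := by
  have hconst (y : EuclideanSpace ℝ (Fin n)) : u y = u x :=
    eq_of_epd_eq_zero (hu.differentiable two_ne_zero)
      (epd_eq_zero_of_harmonic_of_integrable_sq hu hΔ hL2) y x
  have : Nontrivial (EuclideanSpace ℝ (Fin n)) :=
    Module.nontrivial_of_finrank_pos (R := ℝ) (by simpa using hn)
  have hinfinite : ¬ IsFiniteMeasure (volume : Measure (EuclideanSpace ℝ (Fin n))) := fun _ =>
    measure_ne_top (volume : Measure (EuclideanSpace ℝ (Fin n))) Set.univ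
      (measure_univ_of_isAddLeftInvariant volume)
  simp only [hconst] at hL2
  simpa [hinfinite] using integrable_const_iff.mp hL2

end Liouville

theorem rinner_self_nonneg {N : ℕ} (a : Fin N → ℂ) : 0 ≤ rinner a a := by
  rw [rinner, Complex.re_sum]
  exact Finset.sum_nonneg fun k _ => by
    simpa [Complex.mul_re] using add_nonneg (mul_self_nonneg (a k).re) (mul_self_nonneg (a k).im)

theorem nsqV_nonneg {m N : ℕ} (a : Fin m → Fin N → ℂ) : 0 ≤ nsqV a := by
  rw [nsqV, rinnerV]
  exact Finset.sum_nonneg fun α _ => rinner_self_nonneg (a α)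

theorem sq_epd_apply_le_sum_dphiInner {n m : ℕ} (φ : EuclideanSpace ℝ (Fin n) → Fin m → ℝ)
    (i : Fin n) (a : Fin m) (x : EuclideanSpace ℝ (Fin n)) :
    epd φ i x a ^ 2 ≤ ∑ j, dphiInner φ j j x :=
  calc epd φ i x a ^ 2 ≤ dphiInner φ i i x :=
        (sq (epd φ i x a)).trans_le <| Finset.single_le_sum
          (f := fun b => epd φ i x b * epd φ i x b) (fun _ _ => mul_self_nonneg _)
          (Finset.mem_univ a)
    _ ≤ ∑ j, dphiInner φ j j x :=
        Finset.single_le_sum (f := fun j => dphiInner φ j j x)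
          (fun _ _ => Finset.sum_nonneg fun _ _ => mul_self_nonneg _) (Finset.mem_univ i)

theorem dh_liouville_general {n N m : ℕ} (hn : 3 ≤ n)
    (φ : EuclideanSpace ℝ (Fin n) → (Fin m → ℝ)) (hφ : ContDiff ℝ (⊤ : ℕ∞) φ)
    (ψ : EuclideanSpace ℝ (Fin n) → (Fin m → Fin N → ℂ))
    (hharm : IsHarmonic φ)
    (hfin : Integrable (fun x : EuclideanSpace ℝ (Fin n) =>
      (∑ i', dphiInner φ i' i' x)
        + (∑ i, nsqV (epd ψ i x)) ^ ((2 : ℝ) / 3)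
        + (nsqV (ψ x)) ^ 2) volume) :
    ∀ x y, φ x = φ y := by
  have hφ3 : ContDiff ℝ 3 φ := hφ.of_le (WithTop.coe_le_coe.mpr le_top)
  have hφa (a : Fin m) : ContDiff ℝ 3 fun y => φ y a := (contDiff_apply ℝ ℝ a).comp hφ3
  have hgrad (a : Fin m) (i : Fin n) (x : EuclideanSpace ℝ (Fin n)) :
      epd (fun y => φ y a) i x = 0 := by
    refine eq_zero_of_harmonic_of_integrable_sq (by omega) ((hφa a).contDiff_epd le_rfl i)
      (epd_harmonic (hφa a) (hharm.component (hφ3.of_le (by norm_num)) a) i) ?_ x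
    refine hfin.mono' ((((hφa a).of_le (by norm_num)).continuous_epd i).pow 2).aestronglyMeasurable
      (Eventually.of_forall fun y => ?_)
    rw [epd_pi_apply (hφ3.differentiable (by norm_num)), Real.norm_of_nonneg (sq_nonneg _)]
    have hψ : 0 ≤ (∑ j, nsqV (epd ψ j y)) ^ ((2 : ℝ) / 3) :=
      Real.rpow_nonneg (Finset.sum_nonneg fun j _ => nsqV_nonneg _) _
    linarith [sq_epd_apply_le_sum_dphiInner φ i a y, sq_nonneg (nsqV (ψ y))]
  intro x y
  funext a
  exact eq_of_epd_eq_zero ((hφa a).differentiable (by norm_num)) (hgrad a) x y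

/-- Liouville theorem for the flat-target Dirac-harmonic map system on
`ℝⁿ`, `n ≥ 3`: if `Δφ = 0`, `Dψ = 0` and `∫ (|dφ|² + |∇ψ|^{4/3} + |ψ|⁴) < ∞`, then `φ`
is constant. -/
theorem dh_liouville {n N m : ℕ} (hn : 3 ≤ n) (hN : 1 ≤ N) (hm : 1 ≤ m)
    (γ : Fin n → Matrix (Fin N) (Fin N) ℂ) (hγ : IsCliffordFamily γ)
    (φ : EuclideanSpace ℝ (Fin n) → (Fin m → ℝ)) (hφ : ContDiff ℝ (⊤ : ℕ∞) φ)
    (ψ : EuclideanSpace ℝ (Fin n) → (Fin m → Fin N → ℂ)) (hψ : ContDiff ℝ (⊤ : ℕ∞) ψ)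
    (hharm : IsHarmonic φ) (hdirac : ∀ x, DiracV γ ψ x = 0)
    (hfin : Integrable (fun x : EuclideanSpace ℝ (Fin n) =>
      (∑ i', dphiInner φ i' i' x)
        + (∑ i, nsqV (epd ψ i x)) ^ ((2 : ℝ) / 3)
        + (nsqV (ψ x)) ^ 2) volume) :
    ∀ x y, φ x = φ y :=
  dh_liouville_general hn φ hφ ψ hharm hfin
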